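/- arXiv:2103.02102 — 4 statements merged into one kernel-verified Lean document; each statement's English description precedes it below -/
import Mathlib

section
/- Let m be a perfect matching of {0, 1, ..., 2n-1} (a partition into n two-element subsets, called chords). A chord {a, b} of m with a < b is interlaced with an even number of other chords of m if and only if b - a is odd. -/
/-- Two sorted pairs (chords) are interlaced. -/
def Interlaced (p q : ℕ × ℕ) : Prop :=
  (p.1 < q.1 ∧ q.1 < p.2 ∧ p.2 < q.2) ∨ (q.1 < p.1 ∧ p.1 < q.2 ∧ q.2 < p.2)

/-- `m` is a perfect matching of `{0, ..., 2n-1}` given by sorted pairs (chords):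
every element of `{0, ..., 2n-1}` belongs to exactly one chord. -/
def IsPairMatching (n : ℕ) (m : Finset (ℕ × ℕ)) : Prop :=
  (∀ p ∈ m, p.1 < p.2 ∧ p.1 ∈ Finset.range (2 * n) ∧ p.2 ∈ Finset.range (2 * n)) ∧
  ∀ x ∈ Finset.range (2 * n), ∃! p, p ∈ m ∧ (x = p.1 ∨ x = p.2)

open Finset in
/-- A chord `p = (a, b)` (with `a < b`) of a perfect matching `m` of `{0, ..., 2n-1}` is
interlaced with an even number of other chords of `m` if and only if `b - a` is odd. -/
theorem even_interlaced_iff_odd_gap (n : ℕ) (m : Finset (ℕ × ℕ))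
    (hm : IsPairMatching n m) (p : ℕ × ℕ) (hp : p ∈ m) :
    Even {q ∈ (m : Set (ℕ × ℕ)) | q ≠ p ∧ Interlaced p q}.ncard ↔ Odd (p.2 - p.1) := by
  classical
  obtain ⟨h1, h2⟩ := hm
  obtain ⟨hab, ha, hb⟩ := h1 p hp
  -- convert the set ncard to a Finset card
  have hset : {q ∈ (m : Set (ℕ × ℕ)) | q ≠ p ∧ Interlaced p q}
      = ↑(m.filter fun q => q ≠ p ∧ Interlaced p q) := by
    ext q; simp [Set.mem_setOf_eq]
  rw [hset, Set.ncard_coe_finset]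
  -- key decomposition: Ioo p.1 p.2 is the disjoint union of endpoint sets of other chords
  have hunion : Finset.Ioo p.1 p.2
      = (m.erase p).biUnion (fun q => {q.1, q.2} ∩ Finset.Ioo p.1 p.2) := by
    ext x
    simp only [Finset.mem_biUnion, Finset.mem_inter, Finset.mem_erase, Finset.mem_insert,
      Finset.mem_singleton]
    constructor
    · intro hx
      have hxr : x ∈ Finset.range (2 * n) := by
        simp only [Finset.mem_range] at hb ⊢
        exact lt_trans (Finset.mem_Ioo.mp hx).2 hb
      obtain ⟨q, ⟨hq, hxq⟩, huniq⟩ := h2 x hxr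
      refine ⟨q, ⟨?_, hq⟩, ?_, hx⟩
      · rintro rfl
        rcases hxq with rfl | rfl
        · exact absurd (Finset.mem_Ioo.mp hx).1 (lt_irrefl _)
        · exact absurd (Finset.mem_Ioo.mp hx).2 (lt_irrefl _)
      · rcases hxq with h | h <;> [left; right] <;> exact h
    · rintro ⟨q, _, _, hx⟩
      exact hx
  have hdisj : ∀ q ∈ m.erase p, ∀ r ∈ m.erase p, q ≠ r →
      Disjoint ({q.1, q.2} ∩ Finset.Ioo p.1 p.2) ({r.1, r.2} ∩ Finset.Ioo p.1 p.2) := by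
    intro q hq r hr hqr
    rw [Finset.disjoint_left]
    intro x hxq hxr
    simp only [Finset.mem_inter, Finset.mem_insert, Finset.mem_singleton] at hxq hxr
    have hxrange : x ∈ Finset.range (2 * n) := by
      obtain ⟨_, hr1, hr2⟩ := h1 q (Finset.mem_of_mem_erase hq)
      rcases hxq.1 with rfl | rfl
      · exact hr1
      · exact hr2
    obtain ⟨w, hw, huniq⟩ := h2 x hxrange
    have e1 : q = w := huniq q ⟨Finset.mem_of_mem_erase hq, hxq.1⟩
    have e2 : r = w := huniq r ⟨Finset.mem_of_mem_erase hr, hxr.1⟩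
    exact hqr (e1.trans e2.symm)
  have hcard : (Finset.Ioo p.1 p.2).card
      = ∑ q ∈ m.erase p, ({q.1, q.2} ∩ Finset.Ioo p.1 p.2).card := by
    conv_lhs => rw [hunion]
    exact Finset.card_biUnion hdisj
  -- endpoints of other chords are distinct from p.1 and p.2
  have hne : ∀ q ∈ m, q ≠ p → q.1 ≠ p.1 ∧ q.1 ≠ p.2 ∧ q.2 ≠ p.1 ∧ q.2 ≠ p.2 := by
    intro q hq hqp
    obtain ⟨w1, hw1, hu1⟩ := h2 p.1 ha
    obtain ⟨w2, hw2, hu2⟩ := h2 p.2 hb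
    have hp1 : p = w1 := hu1 p ⟨hp, Or.inl rfl⟩
    have hp2 : p = w2 := hu2 p ⟨hp, Or.inr rfl⟩
    refine ⟨?_, ?_, ?_, ?_⟩ <;> intro h
    · exact hqp ((hu1 q ⟨hq, Or.inl h.symm⟩).trans hp1.symm)
    · exact hqp ((hu2 q ⟨hq, Or.inl h.symm⟩).trans hp2.symm)
    · exact hqp ((hu1 q ⟨hq, Or.inr h.symm⟩).trans hp1.symm)
    · exact hqp ((hu2 q ⟨hq, Or.inr h.symm⟩).trans hp2.symm)
  have hpair : ∀ q : ℕ × ℕ, q.1 ≠ q.2 → ({q.1, q.2} ∩ Finset.Ioo p.1 p.2).card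
      = (if q.1 ∈ Finset.Ioo p.1 p.2 then 1 else 0)
        + (if q.2 ∈ Finset.Ioo p.1 p.2 then 1 else 0) := by
    intro q hne12
    rw [show ({q.1, q.2} : Finset ℕ) ∩ Finset.Ioo p.1 p.2
        = ({q.1, q.2} : Finset ℕ).filter (· ∈ Finset.Ioo p.1 p.2) from by
      ext x; simp [and_comm], Finset.card_filter, Finset.sum_pair hne12]
  -- the chords contributing an odd count are exactly the interlaced ones
  have hfilter : ((m.erase p).filter
        fun q => Odd (({q.1, q.2} ∩ Finset.Ioo p.1 p.2)).card)
      = m.filter fun q => q ≠ p ∧ Interlaced p q := by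
    ext q
    simp only [Finset.mem_filter, Finset.mem_erase]
    constructor
    · rintro ⟨⟨hqp, hq⟩, hodd⟩
      refine ⟨hq, hqp, ?_⟩
      obtain ⟨hq12, _, _⟩ := h1 q hq
      obtain ⟨e1, e2, e3, e4⟩ := hne q hq hqp
      rw [hpair q hq12.ne] at hodd
      simp only [Finset.mem_Ioo] at hodd
      unfold Interlaced
      split_ifs at hodd with hA hB hB <;> rw [Nat.odd_iff] at hodd <;> omega
    · rintro ⟨hq, hqp, hint⟩
      refine ⟨⟨hqp, hq⟩, ?_⟩
      obtain ⟨hq12, _, _⟩ := h1 q hq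
      obtain ⟨e1, e2, e3, e4⟩ := hne q hq hqp
      unfold Interlaced at hint
      rw [hpair q hq12.ne, Nat.odd_iff]
      simp only [Finset.mem_Ioo]
      split_ifs with hA hB hB <;> omega
  rw [← hfilter, ← Finset.even_sum_iff_even_card_odd, ← hcard, Nat.card_Ioo,
    Nat.even_iff, Nat.odd_iff]
  omega
end

section
/- Let m be an even-odd perfect matching of {0, 1, ..., 2n-1}, i.e., every chord of m contains exactly one even and one odd number. Then every vertex of the interlacement graph of m has even degree (condition C1 holds). -/
/-- An even-odd perfect matching: each chord has one even and one odd endpoint. -/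
def IsEvenOddPairMatching (n : ℕ) (m : Finset (ℕ × ℕ)) : Prop :=
  IsPairMatching n m ∧ ∀ p ∈ m, (Even p.1 ∧ Odd p.2) ∨ (Odd p.1 ∧ Even p.2)

/-- The interlacement graph of a matching: vertices are the chords,
two chords are adjacent iff they are interlaced. -/
def matchGraph (m : Finset (ℕ × ℕ)) : SimpleGraph {p : ℕ × ℕ // p ∈ m} where
  Adj p q := Interlaced p.val q.val
  symm := ⟨fun p q h => Or.symm h⟩
  loopless := ⟨fun p h => by rcases h with ⟨h, _⟩ | ⟨h, _⟩ <;> exact lt_irrefl _ h⟩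

/-- Condition C1: every vertex has even degree. -/
def CondC1 {V : Type*} (G : SimpleGraph V) : Prop :=
  ∀ v : V, Even (G.neighborSet v).ncard

/-! For a chord `(a, b)`, every point strictly between `a` and `b` is an endpoint of exactly one
chord. A chord meets the open interval `(a, b)` in zero, one or two endpoints, and in exactly one
iff it is interlaced with `(a, b)`. Hence the number of chords interlaced with `(a, b)` has the
parity of `b - a - 1`, which is even when `a` and `b` have opposite parities. -/

open Finset

instance : DecidableRel Interlaced := fun _ _ => inferInstanceAs (Decidable (_ ∨ _))

lemma sum_modEq_card_filter_eq_one {ι : Type*} (s : Finset ι) (f : ι → ℕ)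
    (hf : ∀ i ∈ s, f i ≤ 2) :
    ∑ i ∈ s, f i ≡ #{i ∈ s | f i = 1} [MOD 2] := by
  rw [card_filter, Nat.ModEq, sum_nat_mod, sum_nat_mod s 2 (fun i => if f i = 1 then 1 else 0)]
  refine congrArg (· % 2) (sum_congr rfl fun i hi => ?_)
  have := hf i hi
  split_ifs <;> omega

lemma card_filter_endpoint_le_two (s : Finset ℕ) (q : ℕ × ℕ) :
    #{x ∈ s | x = q.1 ∨ x = q.2} ≤ 2 :=
  calc #{x ∈ s | x = q.1 ∨ x = q.2}
      ≤ #{q.1, q.2} := card_le_card fun x hx => by simpa using (mem_filter.1 hx).2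
    _ ≤ 2 := card_le_two

lemma interlaced_iff_card_filter_endpoint_eq_one {a b : ℕ} {q : ℕ × ℕ} (hq : q.1 < q.2)
    (h1 : q.1 ≠ a) (h2 : q.2 ≠ b) :
    Interlaced (a, b) q ↔ #{x ∈ Ioo a b | x = q.1 ∨ x = q.2} = 1 := by
  rw [filter_or, filter_eq', filter_eq', card_union_of_disjoint (by split_ifs <;> simp [hq.ne])]
  simp only [Interlaced, mem_Ioo]
  split_ifs <;> simp <;> omega

namespace IsPairMatching

variable {n : ℕ} {m : Finset (ℕ × ℕ)}

lemma eq_of_endpoint (hm : IsPairMatching n m) {p q : ℕ × ℕ} (hp : p ∈ m) (hq : q ∈ m) {x : ℕ}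
    (hxp : x = p.1 ∨ x = p.2) (hxq : x = q.1 ∨ x = q.2) : p = q := by
  have hx : x ∈ range (2 * n) := by
    rcases hxp with rfl | rfl
    exacts [(hm.1 p hp).2.1, (hm.1 p hp).2.2]
  exact (hm.2 x hx).unique ⟨hp, hxp⟩ ⟨hq, hxq⟩

lemma sum_card_filter_endpoint (hm : IsPairMatching n m) {s : Finset ℕ}
    (hs : s ⊆ range (2 * n)) :
    ∑ q ∈ m, #{x ∈ s | x = q.1 ∨ x = q.2} = #s := by
  refine (sum_card_bipartiteAbove_eq_sum_card_bipartiteBelow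
    (r := fun (q : ℕ × ℕ) (x : ℕ) => x = q.1 ∨ x = q.2)).trans ?_
  rw [card_eq_sum_ones]
  refine sum_congr rfl fun x hx => card_eq_one_iff_existsUnique.2 ?_
  simpa only [bipartiteBelow, mem_filter] using hm.2 x (hs hx)

lemma card_filter_interlaced_modEq (hm : IsPairMatching n m) {p : ℕ × ℕ} (hp : p ∈ m) :
    #{q ∈ m | Interlaced p q} ≡ #(Ioo p.1 p.2) [MOD 2] := by
  obtain ⟨-, -, hp2⟩ := hm.1 p hp
  have hIoo : Ioo p.1 p.2 ⊆ range (2 * n) := fun x hx => by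
    simp only [mem_range, mem_Ioo] at hx hp2 ⊢
    omega
  have hcongr : ∀ q ∈ m, Interlaced p q ↔ #{x ∈ Ioo p.1 p.2 | x = q.1 ∨ x = q.2} = 1 := by
    intro q hq
    by_cases hqp : q = p
    · subst hqp
      rw [filter_false_of_mem fun x hx => by simp only [mem_Ioo] at hx; omega]
      simp only [Interlaced, card_empty]
      omega
    · have hne : ∀ y, (y = q.1 ∨ y = q.2) → y ≠ p.1 ∧ y ≠ p.2 := fun y hy =>
        ⟨fun h => hqp (hm.eq_of_endpoint hq hp hy (.inl h)),
          fun h => hqp (hm.eq_of_endpoint hq hp hy (.inr h))⟩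
      exact interlaced_iff_card_filter_endpoint_eq_one (hm.1 q hq).1
        (hne q.1 (.inl rfl)).1 (hne q.2 (.inr rfl)).2
  rw [filter_congr hcongr, ← hm.sum_card_filter_endpoint hIoo]
  exact (sum_modEq_card_filter_eq_one _ _ fun q _ => card_filter_endpoint_le_two _ q).symm

end IsPairMatching

lemma even_card_Ioo_of_odd_add {a b : ℕ} (h : Odd (a + b)) : Even #(Ioo a b) := by
  rw [Nat.card_Ioo, Nat.even_iff]
  rw [Nat.odd_iff] at h
  omega

lemma ncard_neighborSet_matchGraph (m : Finset (ℕ × ℕ)) (v : {p // p ∈ m}) :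
    ((matchGraph m).neighborSet v).ncard = #{q ∈ m | Interlaced v.1 q} := by
  rw [← Set.ncard_image_of_injective _ Subtype.val_injective, ← Set.ncard_coe_finset]
  congr 1
  ext q
  simp only [Set.mem_image, SimpleGraph.mem_neighborSet, coe_filter]
  exact ⟨fun ⟨w, hw, hwq⟩ => hwq ▸ ⟨w.2, hw⟩, fun ⟨hq, h⟩ => ⟨⟨q, hq⟩, h, rfl⟩⟩

/-- For an even-odd perfect matching of `{0, ..., 2n-1}`, every vertex of its
interlacement graph has even degree (condition C1 holds). -/
theorem evenOddMatching_condC1 (n : ℕ) (m : Finset (ℕ × ℕ))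
    (hm : IsEvenOddPairMatching n m) :
    CondC1 (matchGraph m) := by
  intro v
  obtain ⟨hmatch, hparity⟩ := hm
  have hodd : Odd (v.1.1 + v.1.2) := by
    rcases hparity v.1 v.2 with ⟨he, ho⟩ | ⟨ho, he⟩
    exacts [he.add_odd ho, ho.add_even he]
  rw [ncard_neighborSet_matchGraph, Nat.even_iff, hmatch.card_filter_interlaced_modEq v.2,
    ← Nat.even_iff]
  exact even_card_Ioo_of_odd_add hodd
end

section
/- Let G9 be the interlacement graph of the matching L9 = { {0,5}, {1,8}, {2,9}, {3,14}, {4,15}, {6,13}, {7,12}, {10,17}, {11,16} } of {0,...,17}, with vertex set {0,...,8} where vertex i corresponds to the i-th chord in the listed order and vertices i, j are adjacent if and only if the corresponding chords are interlaced. Then G9 satisfies condition C2: every pair of distinct non-adjacent vertices of G9 has an even number (possibly zero) of common neighbours. -/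
/-- Interlacement graph of a tuple of chords: vertex `i` corresponds to the `i`-th chord,
and two vertices are adjacent iff the corresponding chords are interlaced. -/
def interGraph {n : ℕ} (c : Fin n → ℕ × ℕ) : SimpleGraph (Fin n) where
  Adj i j := i ≠ j ∧ Interlaced (c i) (c j)
  symm := ⟨fun _ _ h => ⟨h.1.symm, Or.symm h.2⟩⟩
  loopless := ⟨fun _ h => h.1 rfl⟩

/-- The chords of the matching `L9 = {{0,5},{1,8},{2,9},{3,14},{4,15},{6,13},{7,12},{10,17},{11,16}}`
of `{0, ..., 17}`, in the listed order. -/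
def L9chords : Fin 9 → ℕ × ℕ :=
  ![(0, 5), (1, 8), (2, 9), (3, 14), (4, 15), (6, 13), (7, 12), (10, 17), (11, 16)]

/-- The interlacement graph of the matching `L9`. -/
def G9 : SimpleGraph (Fin 9) := interGraph L9chords

/-- Condition C2: each pair of distinct non-adjacent vertices has an even number
(possibly zero) of common neighbours. -/
def CondC2 {V : Type*} (G : SimpleGraph V) : Prop :=
  ∀ u v : V, u ≠ v → ¬ G.Adj u v → Even {w | G.Adj u w ∧ G.Adj v w}.ncard


instance (p q : ℕ × ℕ) : Decidable (Interlaced p q) := by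
  unfold Interlaced; infer_instance

instance : DecidableRel G9.Adj := fun i j => by
  show Decidable (i ≠ j ∧ Interlaced (L9chords i) (L9chords j))
  infer_instance

/-- The interlacement graph `G9` of the matching `L9` satisfies condition C2: every pair
of distinct non-adjacent vertices has an even number (possibly zero) of common neighbours. -/
theorem G9_condC2 : CondC2 G9 := by
  have key : ∀ u v : Fin 9, u ≠ v → ¬ G9.Adj u v →
      Even (Finset.univ.filter (fun w => G9.Adj u w ∧ G9.Adj v w)).card := by decide
  intro u v h1 h2
  rw [show {w | G9.Adj u w ∧ G9.Adj v w} =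
      ↑(Finset.univ.filter (fun w => G9.Adj u w ∧ G9.Adj v w)) by ext; simp,
    Set.ncard_coe_finset]
  exact key u v h1 h2
end

section
/- Let G9 be the interlacement graph of the matching L9 = { {0,5}, {1,8}, {2,9}, {3,14}, {4,15}, {6,13}, {7,12}, {10,17}, {11,16} } of {0,...,17}, with vertex set {0,...,8} where vertex i corresponds to the i-th chord in the listed order and vertices i, j are adjacent if and only if the corresponding chords are interlaced. Let M be the 9×9 adjacency matrix of G9 over the field GF(2) of two elements. Then there is no diagonal matrix Λ over GF(2) such that M + Λ is idempotent, i.e., (M + Λ)·(M + Λ) = M + Λ; that is, G9 fails the Shtylla–Traldi–Zulli (STZ) condition. -/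
open Classical in
/-- Adjacency matrix of a simple graph over `GF(2) = ZMod 2`. -/
noncomputable def adjMat2 {V : Type*} (G : SimpleGraph V) : Matrix V V (ZMod 2) :=
  Matrix.of fun i j => if G.Adj i j then 1 else 0

/-- The Shtylla–Traldi–Zulli condition: there is a diagonal matrix `Λ` over `GF(2)`
such that `M + Λ` is idempotent, where `M` is the adjacency matrix over `GF(2)`. -/
def CondSTZ {V : Type*} [Fintype V] [DecidableEq V] (G : SimpleGraph V) : Prop :=
  ∃ d : V → ZMod 2,
    (adjMat2 G + Matrix.diagonal d) * (adjMat2 G + Matrix.diagonal d)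
      = adjMat2 G + Matrix.diagonal d


/-!
Write `A = M + Λ` with `Λ = diag d`. For `i ≠ j` the `(i, j)` entry of `A * A` is
`(M * M) i j + (d i + d j) * M i j`, so idempotence forces `d i + d j = (M * M) i j + 1` on every
edge `ij`. Hence along any closed walk the edge labels `(M * M) i j + 1` sum to `0` in `GF(2)`.
In `G9` the 4-cycle `1, 5, 7, 3` has labels `0, 1, 0, 0`.
-/

open Matrix

theorem Matrix.add_diagonal_mul_self_apply_of_ne {n R : Type*} [Fintype n] [DecidableEq n]
    [CommRing R] (M : Matrix n n R) (d : n → R) {i j : n} (hij : i ≠ j) :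
    ((M + diagonal d) * (M + diagonal d)) i j = (M * M) i j + (d i + d j) * M i j := by
  simp only [add_mul, mul_add, add_apply, mul_diagonal, diagonal_mul, diagonal_mul_diagonal,
    diagonal_apply_ne _ hij]
  ring

namespace SimpleGraph

variable {V : Type*} [Fintype V] [DecidableEq V] {G : SimpleGraph V} {d : V → ZMod 2}

theorem add_eq_of_adj_of_isIdempotent
    (hd : IsIdempotentElem (adjMat2 G + diagonal d)) {i j : V} (hij : G.Adj i j) :
    d i + d j = (adjMat2 G * adjMat2 G) i j + 1 := by
  have h := congrFun (congrFun hd i) j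
  rw [add_diagonal_mul_self_apply_of_ne _ _ hij.ne, Matrix.add_apply,
    diagonal_apply_ne _ hij.ne] at h
  have hM : adjMat2 G i j = 1 := if_pos hij
  rw [hM, mul_one, add_zero] at h
  linear_combination h - CharTwo.add_self_eq_zero ((adjMat2 G * adjMat2 G) i j)

theorem sum_darts_eq_of_isIdempotent
    (hd : IsIdempotentElem (adjMat2 G + diagonal d)) {u v : V} (p : G.Walk u v) :
    (p.darts.map fun e => (adjMat2 G * adjMat2 G) e.fst e.snd + 1).sum = d u + d v := by
  induction p with
  | nil => exact (CharTwo.add_self_eq_zero _).symm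
  | @cons u w v h p ih =>
    rw [Walk.darts_cons, List.map_cons, List.sum_cons, ih, ← add_eq_of_adj_of_isIdempotent hd h]
    linear_combination CharTwo.add_self_eq_zero (d w)

theorem sum_darts_eq_zero_of_isIdempotent
    (hd : IsIdempotentElem (adjMat2 G + diagonal d)) {u : V} (p : G.Walk u u) :
    (p.darts.map fun e => (adjMat2 G * adjMat2 G) e.fst e.snd + 1).sum = 0 := by
  rw [sum_darts_eq_of_isIdempotent hd p, CharTwo.add_self_eq_zero]

end SimpleGraph

def M9 : Matrix (Fin 9) (Fin 9) (ZMod 2) :=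
  !![0, 1, 1, 1, 1, 0, 0, 0, 0;
    1, 0, 1, 1, 1, 1, 1, 0, 0;
    1, 1, 0, 1, 1, 1, 1, 0, 0;
    1, 1, 1, 0, 1, 0, 0, 1, 1;
    1, 1, 1, 1, 0, 0, 0, 1, 1;
    0, 1, 1, 0, 0, 0, 0, 1, 1;
    0, 1, 1, 0, 0, 0, 0, 1, 1;
    0, 0, 0, 1, 1, 1, 1, 0, 0;
    0, 0, 0, 1, 1, 1, 1, 0, 0]

theorem G9_adj_iff (i j : Fin 9) : G9.Adj i j ↔ M9 i j = 1 := by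
  fin_cases i <;> fin_cases j <;> simp [G9, interGraph, L9chords, Interlaced, M9]

theorem adjMat2_G9 : adjMat2 G9 = M9 := by
  ext i j
  simp only [adjMat2, of_apply, G9_adj_iff]
  split_ifs with h
  · exact h.symm
  · generalize M9 i j = x at h
    fin_cases x
    exacts [rfl, absurd rfl h]

def G9cycle : G9.Walk 1 1 :=
  .cons ((G9_adj_iff 1 5).2 rfl) <| .cons ((G9_adj_iff 5 7).2 rfl) <|
    .cons ((G9_adj_iff 7 3).2 rfl) <| .cons ((G9_adj_iff 3 1).2 rfl) .nil

/-- The interlacement graph `G9` of the matching `L9` fails the Shtylla–Traldi–Zulli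
condition: there is no diagonal matrix `Λ` over `GF(2)` such that `M + Λ` is idempotent,
where `M` is the adjacency matrix of `G9` over `GF(2)`. -/
theorem G9_not_condSTZ : ¬ CondSTZ G9 := by
  rintro ⟨d, hd⟩
  have h := SimpleGraph.sum_darts_eq_zero_of_isIdempotent hd G9cycle
  rw [adjMat2_G9] at h
  exact absurd h (by decide)
end
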